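/- arXiv:2111.05525 — 4 statements merged into one kernel-verified Lean document; each statement's English description precedes it below -/
import Mathlib

section
/- Let λ be a partition of n and T a tableau of shape λ. If μ is a partition of n that is not less than or equal to λ in the dominance order, then f_T(a) = 0 for every point a ∈ K^n of orbit type μ. -/
open MvPolynomial

/-- `l` is a partition of `n`: non-increasing list of positive integers summing to `n`. -/
def IsPartitionList (n : ℕ) (l : List ℕ) : Prop :=
  l.Pairwise (· ≥ ·) ∧ (∀ x ∈ l, 0 < x) ∧ l.sum = n

/-- Dominance order: `l ⊵ m` iff every partial sum of `m` is at most that of `l`. -/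
def Dominates (l m : List ℕ) : Prop :=
  ∀ k : ℕ, (m.take k).sum ≤ (l.take k).sum

/-- `T` is a (bijective) tableau of shape `l`, sending each entry in `Fin n` to its
cell `(row, column)` (0-indexed) of the Young diagram of `l`. -/
def IsTableau (n : ℕ) (l : List ℕ) (T : Fin n → ℕ × ℕ) : Prop :=
  Function.Injective T ∧
    ∀ p : ℕ × ℕ, p ∈ Set.range T ↔ p.1 < l.length ∧ p.2 < l.getD p.1 0

/-- The Specht polynomial of a tableau: product of `x i - x j` over pairs `i, j`
in the same column with `j` strictly below `i`. -/
noncomputable def spechtPoly (n : ℕ) (K : Type*) [Field K] (T : Fin n → ℕ × ℕ) :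
    MvPolynomial (Fin n) K :=
  ∏ p ∈ Finset.univ.filter
      (fun p : Fin n × Fin n => (T p.1).2 = (T p.2).2 ∧ (T p.1).1 < (T p.2).1),
    (X p.1 - X p.2)

/-- The multiplicity of the value `v` among the coordinates of `a`. -/
noncomputable def mult {K : Type*} {n : ℕ} (a : Fin n → K) (v : K) : ℕ :=
  {i | a i = v}.ncard

/-- `a ∈ K^n` has orbit type `l`: the multiplicities of the distinct coordinate
values of `a`, listed in non-increasing order, form the list `l`. -/
def HasOrbitType {K : Type*} {n : ℕ} (a : Fin n → K) (l : List ℕ) : Prop :=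
  l.Pairwise (· ≥ ·) ∧
    ∃ α : Fin l.length → K, Function.Injective α ∧
      (∀ i, ∃ j, a i = α j) ∧ ∀ j : Fin l.length, mult a (α j) = l.get j

/-- `λ + ⟨k⟩` (1-indexed `k`): add one box to the `k`-th part and re-sort
non-increasingly; append a part `1` if `k` exceeds the length. -/
def addBox (l : List ℕ) (k : ℕ) : List ℕ :=
  if k ≤ l.length then
    ((↑(l.set (k - 1) (l.getD (k - 1) 0 + 1)) : Multiset ℕ).sort (· ≤ ·)).reverse
  else l ++ [1]

/-- `F` is an upper filter of partitions of `n` for the dominance order. -/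
def IsUpperFilter (n : ℕ) (F : Set (List ℕ)) : Prop :=
  (∀ l ∈ F, IsPartitionList n l) ∧
    ∀ l m : List ℕ, IsPartitionList n l → m ∈ F → Dominates l m → l ∈ F

/-- `F` is a lower filter of partitions of `n` for the dominance order. -/
def IsLowerFilter (n : ℕ) (F : Set (List ℕ)) : Prop :=
  (∀ l ∈ F, IsPartitionList n l) ∧
    ∀ l m : List ℕ, IsPartitionList n m → l ∈ F → Dominates l m → m ∈ F

/-- Lexicographic order on exponent vectors with `x 0 < x 1 < ⋯ < x (n-1)`. -/
def lexLt {n : ℕ} (a b : Fin n →₀ ℕ) : Prop :=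
  ∃ i, a i < b i ∧ ∀ j, i < j → a j = b j

/-- `m` is the initial (leading) monomial of `f` w.r.t. the strict order `lt`. -/
def IsInitialMon {K : Type*} [CommRing K] {n : ℕ}
    (lt : (Fin n →₀ ℕ) → (Fin n →₀ ℕ) → Prop)
    (f : MvPolynomial (Fin n) K) (m : Fin n →₀ ℕ) : Prop :=
  m ∈ f.support ∧ ∀ m' ∈ f.support, m' ≠ m → lt m' m

/-- The Specht ideal of shape `l`. -/
noncomputable def spechtIdeal (n : ℕ) (K : Type*) [Field K] (l : List ℕ) :
    Ideal (MvPolynomial (Fin n) K) :=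
  Ideal.span { f | ∃ T : Fin n → ℕ × ℕ, IsTableau n l T ∧ f = spechtPoly n K T }

/-- The Specht ideal of a family `F` of partitions: `Σ_{λ ∈ F} I_λ`. -/
noncomputable def spechtIdealFilter (n : ℕ) (K : Type*) [Field K] (F : Set (List ℕ)) :
    Ideal (MvPolynomial (Fin n) K) :=
  Ideal.span { f | ∃ l ∈ F, ∃ T : Fin n → ℕ × ℕ, IsTableau n l T ∧ f = spechtPoly n K T }

/-- A monomial order on `K[x_1,…,x_n]`, given as a strict linear order on the
exponent vectors compatible with addition and with `0` minimal. -/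
structure MonOrder (n : ℕ) where
  lt : (Fin n →₀ ℕ) → (Fin n →₀ ℕ) → Prop
  trichot : ∀ a b, lt a b ∨ a = b ∨ lt b a
  irrefl : ∀ a, ¬ lt a a
  trans' : ∀ a b c, lt a b → lt b c → lt a c
  zero_lt : ∀ a, a ≠ 0 → lt 0 a
  add_right : ∀ a b c, lt a b → lt (a + c) (b + c)

/-! If `f_T(a) ≠ 0`, the entries in any column of `T` carry pairwise distinct values of `a`.
Hence the positions carrying the first `k` values of the orbit type, `μ₁ + ⋯ + μₖ` of them,
meet each column at most `k` times. Pushing their cells up their columns as far as possible (a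
cell goes to the row given by the number of chosen cells above it) packs them injectively into
the first `k` rows of `λ`; they stay inside the diagram because the rows of `λ` are
non-increasing. So `μ₁ + ⋯ + μₖ ≤ λ₁ + ⋯ + λₖ` for every `k`. -/

lemma List.sum_take_eq_sum_range_getD (l : List ℕ) (k : ℕ) :
    (l.take k).sum = ∑ r ∈ Finset.range k, l.getD r 0 := by
  induction k with
  | zero => simp
  | succ k ih =>
    rw [Finset.sum_range_succ, ← ih, List.take_add_one, List.sum_append]
    rcases lt_or_ge k l.length with h | h
    · simp [List.getElem?_eq_getElem h]
    · simp [List.getElem?_eq_none h]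

lemma List.getD_antitone_of_pairwise_ge {l : List ℕ} (hl : l.Pairwise (· ≥ ·)) {r r' : ℕ}
    (h : r' ≤ r) : l.getD r 0 ≤ l.getD r' 0 := by
  rcases lt_or_ge r l.length with hr | hr
  · rw [List.getD_eq_getElem _ _ hr, List.getD_eq_getElem _ _ (h.trans_lt hr)]
    rcases h.lt_or_eq with h | rfl
    · exact List.pairwise_iff_getElem.mp hl r' r _ hr h
    · rfl
  · rw [List.getD_eq_default _ _ hr]
    exact Nat.zero_le _

open Finset

def youngCells (l : List ℕ) (k : ℕ) : Finset (ℕ × ℕ) :=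
  (range k).biUnion fun r => (range (l.getD r 0)).image (Prod.mk r)

lemma mem_youngCells {l : List ℕ} {k : ℕ} {p : ℕ × ℕ} :
    p ∈ youngCells l k ↔ p.1 < k ∧ p.2 < l.getD p.1 0 := by
  rcases p with ⟨r, c⟩
  simp [youngCells]

lemma card_youngCells (l : List ℕ) (k : ℕ) : #(youngCells l k) = (l.take k).sum := by
  rw [youngCells, card_biUnion, List.sum_take_eq_sum_range_getD]
  · simp [card_image_of_injective _ (Prod.mk_right_injective _)]
  · intro r _ r' _ hrr'
    simp only [Function.onFun, disjoint_left, mem_image]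
    rintro _ ⟨c, _, rfl⟩ ⟨c', _, h⟩
    exact hrr' (Prod.ext_iff.mp h).1.symm

section ColumnRank

variable (D : Finset (ℕ × ℕ))

def columnRank (p : ℕ × ℕ) : ℕ := #{q ∈ D | q.2 = p.2 ∧ q.1 < p.1}

lemma columnRank_le_fst (p : ℕ × ℕ) : columnRank D p ≤ p.1 := by
  refine (card_le_card_of_injOn Prod.fst ?_ ?_).trans_eq (card_range p.1)
  · intro q hq
    simpa using (mem_filter.mp hq).2.2
  · intro q hq q' hq' h
    rw [mem_coe, mem_filter] at hq hq'
    exact Prod.ext h (hq.2.1.trans hq'.2.1.symm)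

lemma columnRank_lt_card_column {p : ℕ × ℕ} (hp : p ∈ D) :
    columnRank D p < #{q ∈ D | q.2 = p.2} := by
  refine card_lt_card ((ssubset_iff_of_subset ?_).mpr ⟨p, ?_, ?_⟩)
  · intro q hq
    rw [mem_filter] at hq ⊢
    exact ⟨hq.1, hq.2.1⟩
  · exact mem_filter.mpr ⟨hp, rfl⟩
  · simp

lemma columnRank_strictMono {p p' : ℕ × ℕ} (hp : p ∈ D) (hc : p.2 = p'.2) (h : p.1 < p'.1) :
    columnRank D p < columnRank D p' := by
  refine card_lt_card ((ssubset_iff_of_subset ?_).mpr ⟨p, ?_, ?_⟩)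
  · intro q hq
    rw [mem_filter] at hq ⊢
    exact ⟨hq.1, hq.2.1.trans hc, hq.2.2.trans h⟩
  · exact mem_filter.mpr ⟨hp, hc, h⟩
  · simp

lemma injOn_columnRank_snd : Set.InjOn (fun p => (columnRank D p, p.2)) D := by
  intro p hp p' hp' h
  simp only [Prod.mk.injEq] at h
  obtain ⟨hr, hc⟩ := h
  by_contra hne
  have hrow : p.1 ≠ p'.1 := fun h1 => hne (Prod.ext h1 hc)
  rcases hrow.lt_or_gt with hlt | hlt
  · exact (columnRank_strictMono D hp hc hlt).ne hr
  · exact (columnRank_strictMono D hp' hc.symm hlt).ne hr.symm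

theorem card_le_sum_take_of_card_column_le {l : List ℕ} (hl : l.Pairwise (· ≥ ·)) {k : ℕ}
    (hD : ∀ p ∈ D, p.2 < l.getD p.1 0) (hk : ∀ c, #{q ∈ D | q.2 = c} ≤ k) :
    #D ≤ (l.take k).sum := by
  rw [← card_youngCells]
  refine card_le_card_of_injOn _ (fun p hp => mem_youngCells.mpr ⟨?_, ?_⟩)
    (injOn_columnRank_snd D)
  · exact (columnRank_lt_card_column D hp).trans_le (hk p.2)
  · exact (hD p hp).trans_le (List.getD_antitone_of_pairwise_ge hl (columnRank_le_fst D p))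

end ColumnRank

lemma IsTableau.card_le_sum_take {n : ℕ} {l : List ℕ} {T : Fin n → ℕ × ℕ} (hT : IsTableau n l T)
    (hl : l.Pairwise (· ≥ ·)) {k : ℕ} (B : Finset (Fin n))
    (hk : ∀ c, #{i ∈ B | (T i).2 = c} ≤ k) : #B ≤ (l.take k).sum := by
  rw [← card_image_of_injective B hT.1]
  refine card_le_sum_take_of_card_column_le _ hl ?_ fun c => ?_
  · intro p hp
    obtain ⟨i, -, rfl⟩ := mem_image.mp hp
    exact ((hT.2 (T i)).mp ⟨i, rfl⟩).2
  · rw [filter_image]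
    exact card_image_le.trans (hk c)

lemma fst_eq_of_eval_spechtPoly_ne_zero {K : Type*} [Field K] {n : ℕ} {T : Fin n → ℕ × ℕ}
    {a : Fin n → K} (h : eval a (spechtPoly n K T) ≠ 0) {i j : Fin n}
    (hc : (T i).2 = (T j).2) (ha : a i = a j) : (T i).1 = (T j).1 := by
  have factor_ne_zero : ∀ i j : Fin n, (T i).2 = (T j).2 → (T i).1 < (T j).1 → a i ≠ a j := by
    intro i j hc hlt ha
    refine h ?_
    rw [spechtPoly, map_prod]
    exact prod_eq_zero (i := (i, j)) (by simp [hc, hlt]) (by simp [ha])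
  by_contra hne
  rcases Ne.lt_or_gt hne with hlt | hlt
  · exact factor_ne_zero i j hc hlt ha
  · exact factor_ne_zero j i hc.symm hlt ha.symm

lemma mult_eq_card {K : Type*} [DecidableEq K] {n : ℕ} (a : Fin n → K) (v : K) :
    mult a v = #{i | a i = v} := by
  rw [mult, ← Set.ncard_coe_finset]
  simp

lemma HasOrbitType.exists_card_preimage_eq_sum_take {K : Type*} [DecidableEq K] {n : ℕ}
    {a : Fin n → K} {μ : List ℕ} (ha : HasOrbitType a μ) (k : ℕ) :
    ∃ V : Finset K, #V ≤ k ∧ #{i | a i ∈ V} = (μ.take k).sum := by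
  obtain ⟨-, α, hα, -, hmult⟩ := ha
  set J : Finset (Fin μ.length) := {j | (j : ℕ) < k}
  refine ⟨J.image α, card_image_le.trans ?_, ?_⟩
  · refine (card_le_card_of_injOn Fin.val (fun j hj => ?_) Fin.val_injective.injOn).trans_eq
      (card_range k)
    simpa [J] using hj
  · rw [card_eq_sum_card_fiberwise (s := {i | a i ∈ J.image α}) (t := J.image α)
        fun i hi => (mem_filter.mp (mem_coe.mp hi)).2,
      sum_image hα.injOn]
    have sum_take_eq := List.sum_take_ofFn μ.get k
    rw [List.ofFn_get] at sum_take_eq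
    rw [sum_take_eq]
    refine sum_congr rfl fun j hj => ?_
    rw [← hmult, mult_eq_card, filter_filter]
    congr 1
    ext i
    simp only [mem_filter, mem_univ, true_and, and_iff_right_iff_imp]
    exact fun h => h ▸ mem_image_of_mem α hj

theorem specht_vanish_of_not_dominated_general {K : Type*} [Field K] {n : ℕ}
    {l μ : List ℕ} {T : Fin n → ℕ × ℕ}
    (hl : IsPartitionList n l) (hT : IsTableau n l T)
    (hdom : ¬ Dominates l μ)
    (a : Fin n → K) (ha : HasOrbitType a μ) :
    eval a (spechtPoly n K T) = 0 := by
  classical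
  by_contra hne
  refine hdom fun k => ?_
  obtain ⟨V, hVk, hV⟩ := ha.exists_card_preimage_eq_sum_take k
  rw [← hV]
  refine hT.card_le_sum_take hl.1 _ fun c => ?_
  -- a column of `T` meets each fibre of `a` at most once, since `f_T(a) ≠ 0`
  refine (card_le_card_of_injOn a (fun i hi => (mem_filter.mp (mem_filter.mp hi).1).2) ?_).trans
    hVk
  intro i hi j hj hij
  have hc : (T i).2 = (T j).2 := (mem_filter.mp hi).2.trans (mem_filter.mp hj).2.symm
  exact hT.1 (Prod.ext (fst_eq_of_eval_spechtPoly_ne_zero hne hc hij) hc)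

/-- If the orbit type `μ` of `a` is not dominated by `λ`, then every Specht
polynomial of shape `λ` vanishes at `a`. -/
theorem specht_vanish_of_not_dominated {K : Type*} [Field K] {n : ℕ}
    {l μ : List ℕ} {T : Fin n → ℕ × ℕ}
    (hl : IsPartitionList n l) (hT : IsTableau n l T)
    (hμ : IsPartitionList n μ) (hdom : ¬ Dominates l μ)
    (a : Fin n → K) (ha : HasOrbitType a μ) :
    eval a (spechtPoly n K T) = 0 :=
  specht_vanish_of_not_dominated_general hl hT hdom a ha
end

section
/- For any partition λ of n of positive length m and any positive integers i ≤ j, the partition λ + ⟨j⟩ is less than or equal to λ + ⟨i⟩ in the dominance order on partitions of n+1. -/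
open MvPolynomial

/-!
Re-sorting after adding a box to row `k` has the same effect as adding the box to the first row
whose length equals that of row `k` (a new row if `k` exceeds the length). Hence each partial sum
of `λ + ⟨k⟩` exceeds that of `λ` by `1` exactly when it covers that row, and the row moves
weakly down as `k` grows, since a sorted partition has weakly shorter rows further down.
-/

namespace List

theorem sum_take_set_getElem_add {M : Type*} [AddCommMonoid M] :
    ∀ (l : List M) {t : ℕ} (ht : t < l.length) (a : M) (m : ℕ),
      ((l.set t (l[t] + a)).take m).sum = (l.take m).sum + if t < m then a else 0
  | [], _, ht, _, _ => absurd ht (Nat.not_lt_zero _)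
  | _ :: _, _, _, _, 0 => by simp
  | _ :: _, 0, _, _, _ + 1 => by simp [add_right_comm]
  | _ :: l, t + 1, ht, a, m + 1 => by
    simp only [set_cons_succ, take_succ_cons, sum_cons, getElem_cons_succ,
      sum_take_set_getElem_add l (Nat.lt_of_succ_lt_succ ht) a m, Nat.succ_lt_succ_iff, add_assoc]

theorem getElem_ne_of_lt_idxOf {α : Type*} [DecidableEq α] {l : List α} {a : α} {s : ℕ}
    (hs : s < l.idxOf a) : l[s]'(hs.trans_le idxOf_le_length) ≠ a := by
  simpa using not_of_lt_findIdx hs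

theorem set_perm_set_of_getElem_eq {α : Type*} [DecidableEq α] {l : List α} {a b : ℕ}
    (ha : a < l.length) (hb : b < l.length) (hab : l[a] = l[b]) (v : α) :
    l.set a v ~ l.set b v := by
  refine (set_perm_cons_eraseIdx ha v).trans (Perm.trans ?_ (set_perm_cons_eraseIdx hb v).symm)
  refine .cons v ((erase_getElem ha).symm.trans ?_)
  rw [hab]
  exact erase_getElem hb

theorem getD_mem {α : Type*} (l : List α) {i : ℕ} (hi : i < l.length) (d : α) :
    l.getD i d ∈ l :=
  getD_eq_getElem l d hi ▸ getElem_mem hi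

variable {α : Type*} [LinearOrder α] {l : List α}

theorem Pairwise.getD_le_getD (hl : l.Pairwise (· ≥ ·)) {d : α} (hd : ∀ x ∈ l, d ≤ x)
    {a b : ℕ} (hab : a ≤ b) : l.getD b d ≤ l.getD a d := by
  rcases lt_or_ge b l.length with hb | hb
  · rw [getD_eq_getElem _ _ hb, getD_eq_getElem _ _ (hab.trans_lt hb)]
    rcases hab.lt_or_eq with hab | rfl
    · exact pairwise_iff_getElem.mp hl a b _ hb hab
    · exact le_rfl
  · rw [getD_eq_default _ _ hb]
    rcases lt_or_ge a l.length with ha | ha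
    · rw [getD_eq_getElem _ _ ha]
      exact hd _ (getElem_mem ha)
    · rw [getD_eq_default _ _ ha]

theorem Pairwise.idxOf_le_idxOf (hl : l.Pairwise (· ≥ ·)) {v w : α} (hv : v ∈ l)
    (hwv : w ≤ v) : l.idxOf v ≤ l.idxOf w := by
  by_contra! hlt
  have hvlen : l.idxOf v < l.length := idxOf_lt_length_iff.mpr hv
  have hwlen : l.idxOf w < l.length := hlt.trans hvlen
  have hvw : v ≤ w := by
    simpa [getElem_idxOf] using pairwise_iff_getElem.mp hl _ _ hwlen hvlen hlt
  exact getElem_ne_of_lt_idxOf hlt (by simpa [getElem_idxOf] using le_antisymm hwv hvw)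

end List

theorem List.Pairwise.set_idxOf_succ {l : List ℕ} (hl : l.Pairwise (· ≥ ·)) {y : ℕ}
    (hy : y ∈ l) : (l.set (l.idxOf y) (y + 1)).Pairwise (· ≥ ·) := by
  have ht : l.idxOf y < l.length := List.idxOf_lt_length_iff.mpr hy
  have hty : l[l.idxOf y] = y := List.getElem_idxOf ht
  refine List.pairwise_iff_getElem.mpr fun a b ha hb hab => ?_
  simp only [List.length_set] at ha hb
  have hlab : l[a] ≥ l[b] := List.pairwise_iff_getElem.mp hl a b ha hb hab
  simp only [List.getElem_set]
  split_ifs with hta htb htb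
  · omega
  · subst hta
    omega
  · subst htb
    have : l[a] ≠ y := List.getElem_ne_of_lt_idxOf hab
    omega
  · exact hlab

theorem Multiset.reverse_sort_coe_of_perm {α : Type*} [LinearOrder α] {l l' : List α}
    (hperm : l'.Perm l) (hl : l.Pairwise (· ≥ ·)) :
    (Multiset.sort (l' : Multiset α)).reverse = l := by
  rw [List.reverse_eq_iff]
  refine List.Perm.eq_of_pairwise' (Multiset.pairwise_sort _ _) (List.pairwise_reverse.mpr hl) ?_
  exact (Multiset.coe_eq_coe.mp (Multiset.sort_eq _ _)).trans
    (hperm.trans (List.reverse_perm l).symm)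

namespace IsPartitionList

variable {n : ℕ} {l : List ℕ}

theorem set_idxOf_succ (hl : IsPartitionList n l) {y : ℕ} (hy : y ∈ l) :
    IsPartitionList (n + 1) (l.set (l.idxOf y) (y + 1)) := by
  obtain ⟨hsorted, hpos, hsum⟩ := hl
  have ht : l.idxOf y < l.length := List.idxOf_lt_length_iff.mpr hy
  refine ⟨hsorted.set_idxOf_succ hy, fun x hx => ?_, ?_⟩
  · rcases List.mem_or_eq_of_mem_set hx with hx | rfl
    · exact hpos x hx
    · exact y.succ_pos
  · have := l.sum_take_set_getElem_add ht 1 l.length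
    rw [List.getElem_idxOf ht, List.take_of_length_le (by simp), List.take_length, if_pos ht] at this
    rw [this, hsum]

theorem append_one (hl : IsPartitionList n l) : IsPartitionList (n + 1) (l ++ [1]) := by
  obtain ⟨hsorted, hpos, hsum⟩ := hl
  refine ⟨List.pairwise_append.mpr ⟨hsorted, by simp, ?_⟩, ?_, by simp [hsum]⟩
  · simpa [Nat.one_le_iff_ne_zero, Nat.pos_iff_ne_zero] using hpos
  · simpa [or_imp, forall_and] using hpos

end IsPartitionList

/-- 0-indexed, while `k` is 1-indexed. For `k > l.length` the value `0` is not a part of a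
partition, so this is `l.length`, the new row. -/
def addBoxRow (l : List ℕ) (k : ℕ) : ℕ :=
  l.idxOf (l.getD (k - 1) 0)

section AddBox

variable {n : ℕ} {l : List ℕ} {k : ℕ}

theorem addBoxRow_lt_length (hk : 0 < k) (hkl : k ≤ l.length) : addBoxRow l k < l.length :=
  List.idxOf_lt_length_iff.mpr (l.getD_mem (by omega) 0)

theorem getElem_addBoxRow (hk : 0 < k) (hkl : k ≤ l.length) :
    l[addBoxRow l k]'(addBoxRow_lt_length hk hkl) = l.getD (k - 1) 0 :=
  List.getElem_idxOf _

theorem addBox_eq_set (hl : l.Pairwise (· ≥ ·)) (hk : 0 < k) (hkl : k ≤ l.length) :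
    addBox l k = l.set (addBoxRow l k) (l.getD (k - 1) 0 + 1) := by
  have hk1 : k - 1 < l.length := by omega
  have hrow : l[k - 1] = l[addBoxRow l k]'(addBoxRow_lt_length hk hkl) := by
    rw [getElem_addBoxRow hk hkl, List.getD_eq_getElem]
  rw [addBox, if_pos hkl]
  exact Multiset.reverse_sort_coe_of_perm (List.set_perm_set_of_getElem_eq hk1 _ hrow _)
    (hl.set_idxOf_succ (l.getD_mem hk1 0))

theorem addBox_eq_append (hkl : l.length < k) : addBox l k = l ++ [1] :=
  if_neg hkl.not_ge

theorem addBoxRow_of_length_lt (hl : IsPartitionList n l) (hkl : l.length < k) :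
    addBoxRow l k = l.length := by
  rw [addBoxRow, List.getD_eq_default _ _ (by omega)]
  exact List.idxOf_eq_length fun h => (hl.2.1 0 h).false

theorem isPartitionList_addBox (hl : IsPartitionList n l) (hk : 0 < k) :
    IsPartitionList (n + 1) (addBox l k) := by
  rcases le_or_gt k l.length with hkl | hkl
  · rw [addBox_eq_set hl.1 hk hkl]
    exact hl.set_idxOf_succ (l.getD_mem (by omega) 0)
  · rw [addBox_eq_append hkl]
    exact hl.append_one

theorem sum_take_addBox (hl : IsPartitionList n l) (hk : 0 < k) (m : ℕ) :
    ((addBox l k).take m).sum = (l.take m).sum + if addBoxRow l k < m then 1 else 0 := by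
  rcases le_or_gt k l.length with hkl | hkl
  · rw [addBox_eq_set hl.1 hk hkl, ← getElem_addBoxRow hk hkl]
    exact l.sum_take_set_getElem_add _ 1 m
  · rw [addBox_eq_append hkl, addBoxRow_of_length_lt hl hkl, List.take_append, List.sum_append]
    rcases le_or_gt m l.length with hm | hm
    · simp [Nat.sub_eq_zero_of_le hm, hm.not_gt]
    · obtain ⟨d, hd⟩ : ∃ d, m - l.length = d + 1 := Nat.exists_eq_add_one.mpr (by omega)
      simp [hm, List.take_of_length_le hm.le, hd]

theorem addBoxRow_le_addBoxRow (hl : l.Pairwise (· ≥ ·)) {i j : ℕ} (hij : i ≤ j) :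
    addBoxRow l i ≤ addBoxRow l j := by
  have hle : l.getD (j - 1) 0 ≤ l.getD (i - 1) 0 :=
    hl.getD_le_getD (fun x _ => x.zero_le) (Nat.sub_le_sub_right hij 1)
  rcases lt_or_ge (i - 1) l.length with hi | hi
  · exact hl.idxOf_le_idxOf (l.getD_mem hi 0) hle
  · rw [addBoxRow, addBoxRow, List.getD_eq_default _ _ hi, List.getD_eq_default _ _ (by omega)]

end AddBox

theorem addBox_dominates_general {n : ℕ} {l : List ℕ} (hl : IsPartitionList n l)
    {i j : ℕ} (hi : 0 < i) (hij : i ≤ j) :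
    IsPartitionList (n + 1) (addBox l i) ∧ IsPartitionList (n + 1) (addBox l j) ∧
      Dominates (addBox l i) (addBox l j) := by
  refine ⟨isPartitionList_addBox hl hi, isPartitionList_addBox hl (hi.trans_le hij), fun m => ?_⟩
  rw [sum_take_addBox hl hi, sum_take_addBox hl (hi.trans_le hij)]
  have hrow := addBoxRow_le_addBoxRow hl.1 hij
  split_ifs <;> omega

/-- For `i ≤ j`, `λ + ⟨j⟩ ⊴ λ + ⟨i⟩` in the dominance order on partitions of `n+1`. -/
theorem addBox_dominates {n : ℕ} {l : List ℕ} (hl : IsPartitionList n l)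
    (hlen : 0 < l.length) {i j : ℕ} (hi : 0 < i) (hij : i ≤ j) :
    IsPartitionList (n + 1) (addBox l i) ∧ IsPartitionList (n + 1) (addBox l j) ∧
      Dominates (addBox l i) (addBox l j) :=
  addBox_dominates_general hl hi hij
end

section
/- Let T be a column standard tableau of shape λ (a partition of n), and suppose the number i appears in the d_i-th row of T for each i. Then the initial monomial of the Specht polynomial f_T with respect to the lexicographic order with x_1 < x_2 < ... < x_n equals the product over i of x_i^{d_i - 1}. -/
open MvPolynomial

/-!
Lex-initial monomials are multiplicative, and `x i - x j` with `i < j` has initial monomial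
`x j`. For a column standard tableau every factor of `f_T` has this form with `j` the lower
entry, so the initial monomial of `f_T` is `∏ x j ^ (number of entries above j in its column)`,
and since the shape is a partition that number is the row index of `j`.

The order `lexLt` decides at the largest differing variable, so it is the `Colex` order on
exponent vectors; Mathlib's `MonomialOrder.lex` decides at the smallest one.
-/

open Finset
open scoped MonomialOrder

noncomputable def MonomialOrder.colex {σ : Type*} [LinearOrder σ] [WellFoundedLT σ] :
    MonomialOrder σ where
  syn := Colex (σ →₀ ℕ)
  toSyn := { toEquiv := toColex, map_add' := toColex_add }
  toSyn_monotone := Finsupp.toColex_monotone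

theorem MonomialOrder.colex_lt_iff {σ : Type*} [LinearOrder σ] [WellFoundedLT σ]
    {c d : σ →₀ ℕ} : c ≺[colex] d ↔ toColex c < toColex d :=
  Iff.rfl

theorem lexLt_eq_colex {n : ℕ} :
    (lexLt : (Fin n →₀ ℕ) → (Fin n →₀ ℕ) → Prop) = (· ≺[MonomialOrder.colex] ·) := by
  ext c d
  rw [MonomialOrder.colex_lt_iff, Finsupp.Colex.lt_iff]
  exact exists_congr fun _ => and_comm

theorem MonomialOrder.isInitialMon_degree {n : ℕ} {K : Type*} [CommRing K]
    (m : MonomialOrder (Fin n)) {f : MvPolynomial (Fin n) K} (hf : f ≠ 0) :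
    IsInitialMon (· ≺[m] ·) f (m.degree f) :=
  ⟨m.degree_mem_support hf, fun _ hc hne =>
    (m.le_degree hc).lt_of_ne (m.toSyn.injective.ne hne)⟩

theorem MonomialOrder.degree_X_sub_X {σ K : Type*} [CommRing K] [Nontrivial K]
    (m : MonomialOrder σ) {i j : σ} (hij : Finsupp.single i 1 ≺[m] Finsupp.single j 1) :
    m.degree (X i - X j : MvPolynomial σ K) = Finsupp.single j 1 := by
  rw [← neg_sub, m.degree_neg, m.degree_sub_of_lt] <;> simp [m.degree_X, hij]

def columnPairs {n : ℕ} (T : Fin n → ℕ × ℕ) : Finset (Fin n × Fin n) :=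
  {p | (T p.1).2 = (T p.2).2 ∧ (T p.1).1 < (T p.2).1}

theorem X_sub_X_ne_zero_of_mem_columnPairs {n : ℕ} {R : Type*} [CommRing R] [Nontrivial R]
    {T : Fin n → ℕ × ℕ} {p : Fin n × Fin n} (hp : p ∈ columnPairs T) :
    (X p.1 - X p.2 : MvPolynomial (Fin n) R) ≠ 0 := by
  simp only [columnPairs, mem_filter, mem_univ, true_and] at hp
  exact sub_ne_zero.mpr (X_injective.ne fun h => hp.2.ne (by rw [h]))

theorem IsTableau.exists_above {n : ℕ} {l : List ℕ} {T : Fin n → ℕ × ℕ}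
    (hl : l.Pairwise (· ≥ ·)) (hT : IsTableau n l T) (i : Fin n) {r : ℕ} (hr : r < (T i).1) :
    ∃ j, T j = (r, (T i).2) := by
  obtain ⟨hrow, hcol⟩ := (hT.2 (T i)).mp ⟨i, rfl⟩
  have hrl : r < l.length := hr.trans hrow
  refine (hT.2 _).mpr ⟨hrl, hcol.trans_le ?_⟩
  rw [List.getD_eq_getElem _ _ hrl, List.getD_eq_getElem _ _ hrow]
  exact List.pairwise_iff_get.mp hl ⟨r, hrl⟩ ⟨_, hrow⟩ hr

theorem IsTableau.card_above_eq_row {n : ℕ} {l : List ℕ} {T : Fin n → ℕ × ℕ}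
    (hl : l.Pairwise (· ≥ ·)) (hT : IsTableau n l T) (i : Fin n) :
    #{j | (T j).2 = (T i).2 ∧ (T j).1 < (T i).1} = (T i).1 := by
  rw [← card_range (T i).1]
  refine card_bij (fun j _ => (T j).1) (fun j hj => ?_) (fun j₁ hj₁ j₂ hj₂ hrow => ?_)
    fun r hr => ?_
  · simp_all
  · simp only [mem_filter, mem_univ, true_and] at hj₁ hj₂
    exact hT.1 (Prod.ext hrow (hj₁.1.trans hj₂.1.symm))
  · obtain ⟨j, hj⟩ := hT.exists_above hl i (mem_range.mp hr)
    exact ⟨j, by simp [hj, mem_range.mp hr], by simp [hj]⟩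

theorem IsTableau.sum_columnPairs_single {n : ℕ} {l : List ℕ} {T : Fin n → ℕ × ℕ}
    (hl : l.Pairwise (· ≥ ·)) (hT : IsTableau n l T) :
    ∑ p ∈ columnPairs T, Finsupp.single p.2 1 =
      Finsupp.equivFunOnFinite.symm fun i => (T i).1 := by
  ext i
  rw [Finsupp.finsetSum_apply, Finsupp.equivFunOnFinite_symm_apply_apply,
    ← hT.card_above_eq_row hl i]
  simp only [Finsupp.single_apply, sum_boole, Nat.cast_id]
  refine card_nbij' Prod.fst (fun j => (j, i)) ?_ ?_ ?_ ?_ <;>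
    rintro ⟨j, k⟩ <;> grind [columnPairs]

theorem spechtPoly_eq_prod_columnPairs (n : ℕ) (K : Type*) [Field K] (T : Fin n → ℕ × ℕ) :
    spechtPoly n K T = ∏ p ∈ columnPairs T, (X p.1 - X p.2) :=
  rfl

theorem spechtPoly_ne_zero (n : ℕ) (K : Type*) [Field K] (T : Fin n → ℕ × ℕ) :
    spechtPoly n K T ≠ 0 :=
  prod_ne_zero_iff.mpr fun _ => X_sub_X_ne_zero_of_mem_columnPairs

theorem degree_spechtPoly_colex {n : ℕ} {K : Type*} [Field K] {T : Fin n → ℕ × ℕ}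
    (hcs : ∀ i j : Fin n, (T i).2 = (T j).2 → (T i).1 < (T j).1 → i < j) :
    MonomialOrder.colex.degree (spechtPoly n K T) =
      ∑ p ∈ columnPairs T, Finsupp.single p.2 1 := by
  have hlt : ∀ p ∈ columnPairs T, p.1 < p.2 := fun p hp => by
    simp only [columnPairs, mem_filter, mem_univ, true_and] at hp
    exact hcs _ _ hp.1 hp.2
  rw [spechtPoly_eq_prod_columnPairs,
    MonomialOrder.degree_prod fun _ => X_sub_X_ne_zero_of_mem_columnPairs]
  exact sum_congr rfl fun p hp =>
    MonomialOrder.colex.degree_X_sub_X (Finsupp.Colex.single_lt_iff.mpr (hlt p hp))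

/-- Rows are 0-indexed, so the exponent `(T i).1` of `x i` is the paper's `d_i - 1`. -/
theorem initial_spechtPoly_lex {K : Type*} [Field K] {n : ℕ} {l : List ℕ}
    {T : Fin n → ℕ × ℕ} (hl : IsPartitionList n l) (hT : IsTableau n l T)
    (hcs : ∀ i j : Fin n, (T i).2 = (T j).2 → (T i).1 < (T j).1 → i < j) :
    IsInitialMon lexLt (spechtPoly n K T)
      (Finsupp.equivFunOnFinite.symm fun i => (T i).1) := by
  rw [lexLt_eq_colex, ← hT.sum_columnPairs_single hl.1, ← degree_spechtPoly_colex (K := K) hcs]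
  exact MonomialOrder.colex.isInitialMon_degree (spechtPoly_ne_zero n K T)
end

section
/- If f ∈ K[x_1,...,x_n] is a product of linear forms, and < and <' are two monomial orders inducing the same ordering on the variables x_1,...,x_n, then the initial monomial of f with respect to < equals the initial monomial of f with respect to <'. -/
open MvPolynomial

/-!
The initial monomial is multiplicative: `in(g * h) = in g + in h`, because every other
product of monomials of `g` and `h` is strictly smaller. So the initial monomial of a
product of linear forms is the sum of the initial monomials of its factors, and the
initial monomial of a linear form is its largest variable, which only depends on the
ordering of the variables.
-/

namespace MonOrder

variable {n : ℕ} (o : MonOrder n)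

theorem add_left {b c : Fin n →₀ ℕ} (a : Fin n →₀ ℕ) (h : o.lt b c) :
    o.lt (a + b) (a + c) := by
  rw [add_comm a b, add_comm a c]
  exact o.add_right b c a h

variable {R : Type*} [CommRing R]

theorem eq_of_isInitialMon {f : MvPolynomial (Fin n) R} {m m' : Fin n →₀ ℕ}
    (hm : IsInitialMon o.lt f m) (hm' : IsInitialMon o.lt f m') : m = m' := by
  by_contra hne
  exact o.irrefl m (o.trans' m m' m (hm'.2 m hm.1 hne) (hm.2 m' hm'.1 (Ne.symm hne)))

theorem exists_isInitialMon {f : MvPolynomial (Fin n) R} (hf : f ≠ 0) :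
    ∃ m, IsInitialMon o.lt f m := by
  -- the reversed order is well-founded on the finite support; its minimum is the initial monomial
  let gt : f.support → f.support → Prop := fun x y => o.lt y x
  have : IsTrans _ gt := ⟨fun x y z hxy hyz => o.trans' _ _ _ hyz hxy⟩
  have : Std.Irrefl gt := ⟨fun x => o.irrefl x⟩
  obtain ⟨m₀, hm₀⟩ := support_nonempty.2 hf
  obtain ⟨m, -, hmax⟩ :=
    (Finite.wellFounded_of_trans_of_irrefl gt).has_min Set.univ ⟨⟨m₀, hm₀⟩, trivial⟩
  refine ⟨m, m.2, fun x hx hxm => ?_⟩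
  rcases o.trichot x m with hlt | rfl | hgt
  · exact hlt
  · exact absurd rfl hxm
  · exact absurd hgt (hmax ⟨x, hx⟩ trivial)

theorem add_lt_of_isInitialMon {g h : MvPolynomial (Fin n) R} {a b c d : Fin n →₀ ℕ}
    (ha : IsInitialMon o.lt g a) (hb : IsInitialMon o.lt h b)
    (hc : c ∈ g.support) (hd : d ∈ h.support) (hne : (c, d) ≠ (a, b)) :
    o.lt (c + d) (a + b) := by
  rcases eq_or_ne c a with rfl | hca
  · exact o.add_left c (hb.2 d hd fun hdb => hne (by rw [hdb]))
  · have hlt : o.lt (c + d) (a + d) := o.add_right c a d (ha.2 c hc hca)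
    rcases eq_or_ne d b with rfl | hdb
    · exact hlt
    · exact o.trans' _ _ _ hlt (o.add_left a (hb.2 d hd hdb))

theorem isInitialMon_mul [NoZeroDivisors R] {g h : MvPolynomial (Fin n) R}
    {a b : Fin n →₀ ℕ} (ha : IsInitialMon o.lt g a) (hb : IsInitialMon o.lt h b) :
    IsInitialMon o.lt (g * h) (a + b) := by
  constructor
  · rw [mem_support_iff, coeff_mul,
      Finset.sum_eq_single_of_mem (a, b) (Finset.HasAntidiagonal.mem_antidiagonal.2 rfl)]
    · exact mul_ne_zero (mem_support_iff.1 ha.1) (mem_support_iff.1 hb.1)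
    · intro p hp hpab
      by_contra hp0
      have hlt := o.add_lt_of_isInitialMon ha hb (mem_support_iff.2 (left_ne_zero_of_mul hp0))
        (mem_support_iff.2 (right_ne_zero_of_mul hp0)) hpab
      rw [Finset.HasAntidiagonal.mem_antidiagonal.1 hp] at hlt
      exact o.irrefl _ hlt
  · intro m hm hne
    obtain ⟨c, hc, d, hd, rfl⟩ := Finset.mem_add.1 (support_mul g h hm)
    exact o.add_lt_of_isInitialMon ha hb hc hd fun hcd => hne (by simp_all)

end MonOrder

theorem MonOrder.eq_of_isInitialMon_list_prod {R : Type*} [CommRing R] [IsDomain R] {n : ℕ}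
    (o o' : MonOrder n)
    {L : List (MvPolynomial (Fin n) R)}
    (hL : ∀ g ∈ L, ∀ a a', IsInitialMon o.lt g a → IsInitialMon o'.lt g a' → a = a')
    {m m' : Fin n →₀ ℕ} (hm : IsInitialMon o.lt L.prod m) (hm' : IsInitialMon o'.lt L.prod m') :
    m = m' := by
  induction L generalizing m m' with
  | nil =>
    rw [List.prod_nil] at hm hm'
    have hm0 := hm.1
    have hm0' := hm'.1
    rw [support_one, Finset.mem_singleton] at hm0 hm0'
    rw [hm0, hm0']
  | cons g L ih =>
    rw [List.prod_cons] at hm hm'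
    have hne : g * L.prod ≠ 0 := support_nonempty.1 ⟨m, hm.1⟩
    obtain ⟨a, ha⟩ := o.exists_isInitialMon (left_ne_zero_of_mul hne)
    obtain ⟨b, hb⟩ := o.exists_isInitialMon (right_ne_zero_of_mul hne)
    obtain ⟨a', ha'⟩ := o'.exists_isInitialMon (left_ne_zero_of_mul hne)
    obtain ⟨b', hb'⟩ := o'.exists_isInitialMon (right_ne_zero_of_mul hne)
    calc m = a + b := o.eq_of_isInitialMon hm (o.isInitialMon_mul ha hb)
      _ = a' + b' := by
        rw [hL g List.mem_cons_self a a' ha ha',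
          ih (fun g' hg' => hL g' (List.mem_cons_of_mem g hg')) hb hb']
      _ = m' := o'.eq_of_isInitialMon (o'.isInitialMon_mul ha' hb') hm'

theorem MvPolynomial.IsHomogeneous.exists_eq_single_of_mem_support {σ R : Type*}
    [CommSemiring R] {g : MvPolynomial σ R} (hg : g.IsHomogeneous 1) {d : σ →₀ ℕ}
    (hd : d ∈ g.support) : ∃ i, d = Finsupp.single i 1 := by
  have hdeg : d.degree = 1 := by
    rw [Finsupp.degree_eq_weight_one]
    exact hg (mem_support_iff.1 hd)
  obtain ⟨i, hi⟩ : d ∈ Set.range fun i => Finsupp.single i 1 :=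
    Finsupp.range_single_one.symm ▸ hdeg
  exact ⟨i, hi.symm⟩

theorem MonOrder.eq_of_isInitialMon_of_isHomogeneous_one {R : Type*} [CommRing R] {n : ℕ}
    {o o' : MonOrder n}
    (hsame : ∀ i j : Fin n,
      o.lt (Finsupp.single i 1) (Finsupp.single j 1) ↔
        o'.lt (Finsupp.single i 1) (Finsupp.single j 1))
    {g : MvPolynomial (Fin n) R} (hg : g.IsHomogeneous 1) {a a' : Fin n →₀ ℕ}
    (ha : IsInitialMon o.lt g a) (ha' : IsInitialMon o'.lt g a') : a = a' := by
  by_contra hne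
  have hlt : o.lt a' a := ha.2 a' ha'.1 (Ne.symm hne)
  have hlt' : o'.lt a a' := ha'.2 a ha.1 hne
  obtain ⟨i, rfl⟩ := hg.exists_eq_single_of_mem_support ha.1
  obtain ⟨j, rfl⟩ := hg.exists_eq_single_of_mem_support ha'.1
  exact o'.irrefl _ (o'.trans' _ _ _ hlt' ((hsame j i).1 hlt))

/-- A product of linear forms has the same initial monomial with respect to any
two monomial orders inducing the same ordering of the variables. -/
theorem initial_eq_of_same_variable_order {K : Type*} [Field K] {n : ℕ}
    (o o' : MonOrder n)
    (hsame : ∀ i j : Fin n,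
      o.lt (Finsupp.single i 1) (Finsupp.single j 1) ↔
        o'.lt (Finsupp.single i 1) (Finsupp.single j 1))
    (L : List (MvPolynomial (Fin n) K)) (hL : ∀ g ∈ L, g.IsHomogeneous 1)
    (f : MvPolynomial (Fin n) K) (hf : f = L.prod)
    (m m' : Fin n →₀ ℕ) (hm : IsInitialMon o.lt f m) (hm' : IsInitialMon o'.lt f m') :
    m = m' := by
  subst hf
  exact MonOrder.eq_of_isInitialMon_list_prod o o'
    (fun g hg _ _ => MonOrder.eq_of_isInitialMon_of_isHomogeneous_one hsame (hL g hg)) hm hm'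
end
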